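/- arXiv:1009.0807 — 2 statements merged into one kernel-verified Lean document; each statement's English description precedes it below -/
import Mathlib

section
/- Let E be an elliptic curve over a field K of characteristic not 2 (or K perfect), with Weierstrass coordinates, and let P ∈ E(K) be a point that is not 2-torsion. If E'/K is an elliptic curve with Weierstrass coordinate functions x', y' and φ : E' → E is an isogeny defined over K with φ(R) = P for some point R ∈ E'(K̄), then K(x'(R), y'(R)) = K(x'(R)). -/
open WeierstrassCurve Polynomial
open scoped WeierstrassCurve.Affine

/-- The x-coordinate of a nonsingular point, with junk value `0` at the point at infinity. -/
noncomputable def ptx {F : Type*} [Field F] {W : WeierstrassCurve.Affine F} :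
    W.Point → F
  | .zero => 0
  | @WeierstrassCurve.Affine.Point.some _ _ _ x _ _ => x

/-- The y-coordinate of a nonsingular point, with junk value `0` at the point at infinity. -/
noncomputable def pty {F : Type*} [Field F] {W : WeierstrassCurve.Affine F} :
    W.Point → F
  | .zero => 0
  | @WeierstrassCurve.Affine.Point.some _ _ _ _ y _ => y

/-- Two points on (possibly different) Weierstrass curves over the same field agree. -/
def SamePt {F : Type*} [Field F] {W₁ W₂ : WeierstrassCurve.Affine F}
    (P : W₁.Point) (Q : W₂.Point) : Prop :=
  ptx P = ptx Q ∧ pty P = pty Q ∧ (P = .zero ↔ Q = .zero)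

open scoped Classical in
/-- An isogeny (with base `L` and fixed algebraic closure `Ω`): a surjective, Galois-equivariant
group homomorphism on `Ω`-points with finite kernel. -/
structure Isogeny (L : Type*) [Field L] (Ω : Type*) [Field Ω] [Algebra L Ω]
    (W' W : WeierstrassCurve L) where
  hom : (W'.baseChange Ω).toAffine.Point →+ (W.baseChange Ω).toAffine.Point
  surjective : Function.Surjective hom
  finiteKer : Set.Finite {Q : (W'.baseChange Ω).toAffine.Point | hom Q = 0}
  equivariant : ∀ σ : Ω ≃ₐ[L] Ω, ∀ Q : (W'.baseChange Ω).toAffine.Point,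
    hom (WeierstrassCurve.Affine.Point.map (W' := W') σ.toAlgHom Q) =
      WeierstrassCurve.Affine.Point.map (W' := W) σ.toAlgHom (hom Q)

open scoped Classical in
/-- The degree of a (separable) isogeny: the size of its kernel. -/
noncomputable def Isogeny.degree {L : Type*} [Field L] {Ω : Type*} [Field Ω] [Algebra L Ω]
    {W' W : WeierstrassCurve L} (φ : Isogeny L Ω W' W) : ℕ :=
  Nat.card {Q : (W'.baseChange Ω).toAffine.Point | φ.hom Q = 0}

/-!
Write `R = (x, y)` and `L = K(x)`. Every `σ ∈ Aut(K̄/L)` moves `R` to a point with the same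
`x`-coordinate, i.e. to `±R`, and `σ R = -R` is impossible since it would give
`P = σ P = φ (σ R) = -P`. So `y` is fixed by `Aut(K̄/L)`, and lies in `L` as soon as it is separable
over `L`. That holds when `K` is perfect, and also when the conjugate root `-y - a₁x - a₃` of the
quadratic satisfied by `y` over `L` differs from `y`; if the two roots coincide and `2 ≠ 0`, then
`y = -(a₁x + a₃)/2 ∈ L` directly.
-/

lemma mem_bot_of_isSeparable_of_forall_algEquiv_apply_eq {L Ω : Type*} [Field L] [Field Ω]
    [IsAlgClosed Ω] [Algebra L Ω] [Algebra.IsAlgebraic L Ω] {y : Ω} (hsep : IsSeparable L y)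
    (hfix : ∀ σ : Ω ≃ₐ[L] Ω, σ y = y) : y ∈ (⊥ : Subalgebra L Ω) := by
  have : IsAlgClosure L Ω := ⟨inferInstance, inferInstance⟩
  by_contra h
  obtain ⟨z, hne, hconj⟩ :=
    (notMem_iff_exists_ne_and_isConjRoot hsep (IsAlgClosed.splits _)).mp h
  obtain ⟨σ, rfl⟩ := hconj.symm.exists_algEquiv
  exact hne (hfix σ).symm

lemma isSeparable_of_add_eq_of_mul_eq {L Ω : Type*} [Field L] [Field Ω] [Algebra L Ω]
    {y y' : Ω} {b c : L} (hsum : algebraMap L Ω b = y + y') (hprod : algebraMap L Ω c = y * y')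
    (hne : y ≠ y') : IsSeparable L y := by
  set p : L[X] := X ^ 2 - C b * X + C c
  have hp : p.map (algebraMap L Ω) = (X - C y) * (X - C y') := by
    simp only [p, Polynomial.map_add, Polynomial.map_sub, Polynomial.map_mul, Polynomial.map_pow,
      Polynomial.map_X, Polynomial.map_C, hsum, hprod, C_add, C_mul]
    ring
  have hroot : aeval y p = 0 := by
    rw [aeval_def, ← eval_map, hp]
    simp
  have hsep : (p.map (algebraMap L Ω)).Separable := by
    rw [hp]
    exact separable_X_sub_C.mul separable_X_sub_C
      (isCoprime_X_sub_C_of_isUnit_sub (sub_ne_zero.mpr hne).isUnit)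
  exact ((separable_map _).mp hsep).of_dvd (minpoly.dvd L y hroot)

namespace WeierstrassCurve

variable {K Ω : Type*} [Field K] [Field Ω] [Algebra K Ω] (W : WeierstrassCurve K)
  {L : IntermediateField K Ω} {x : Ω}

lemma add_negY_mem (hx : x ∈ L) (y : Ω) : y + (W.baseChange Ω).toAffine.negY x y ∈ L := by
  rw [show y + (W.baseChange Ω).toAffine.negY x y
      = -((W.baseChange Ω).a₁ * x + (W.baseChange Ω).a₃) by simp only [Affine.negY]; ring]
  exact neg_mem (add_mem (mul_mem (L.algebraMap_mem W.a₁) hx) (L.algebraMap_mem W.a₃))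

lemma mul_negY_mem (hx : x ∈ L) {y : Ω} (h : (W.baseChange Ω).toAffine.Equation x y) :
    y * (W.baseChange Ω).toAffine.negY x y ∈ L := by
  rw [Affine.equation_iff] at h
  rw [show y * (W.baseChange Ω).toAffine.negY x y = -(x ^ 3 + (W.baseChange Ω).a₂ * x ^ 2
      + (W.baseChange Ω).a₄ * x + (W.baseChange Ω).a₆) by
    simp only [Affine.negY]; linear_combination -h]
  exact neg_mem (add_mem (add_mem (add_mem (pow_mem hx 3)
    (mul_mem (L.algebraMap_mem W.a₂) (pow_mem hx 2))) (mul_mem (L.algebraMap_mem W.a₄) hx))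
    (L.algebraMap_mem W.a₆))

lemma isSeparable_of_ne_negY (hx : x ∈ L) {y : Ω} (h : (W.baseChange Ω).toAffine.Equation x y)
    (hy : y ≠ (W.baseChange Ω).toAffine.negY x y) : IsSeparable L y :=
  isSeparable_of_add_eq_of_mul_eq (b := ⟨_, W.add_negY_mem hx y⟩)
    (c := ⟨_, W.mul_negY_mem hx h⟩) rfl rfl hy

lemma mem_of_negY_eq (h2 : (2 : Ω) ≠ 0) (hx : x ∈ L) {y : Ω}
    (hy : (W.baseChange Ω).toAffine.negY x y = y) : y ∈ L := by
  rw [show y = (y + (W.baseChange Ω).toAffine.negY x y) / 2 by rw [hy]; field_simp; ring]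
  exact div_mem (W.add_negY_mem hx y) (ofNat_mem L 2)

end WeierstrassCurve

namespace Isogeny

open scoped Classical

variable {K Ω : Type*} [Field K] [Field Ω] [Algebra K Ω] {W' W : WeierstrassCurve K}
  (φ : Isogeny K Ω W' W) {P : (W.baseChange K).toAffine.Point}

lemma map_ne_neg (hP : 2 • P ≠ 0) {R : (W'.baseChange Ω).toAffine.Point}
    (hR : φ.hom R = Affine.Point.map (Algebra.ofId K Ω) P) (σ : Ω ≃ₐ[K] Ω) :
    Affine.Point.map σ.toAlgHom R ≠ -R := by
  intro hσR
  have hneg : Affine.Point.map (Algebra.ofId K Ω) P = -Affine.Point.map (Algebra.ofId K Ω) P := by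
    have := φ.equivariant σ R
    rw [hσR, map_neg, hR, Affine.Point.map_baseChange] at this
    exact this.symm
  apply hP
  apply Affine.Point.map_injective (Algebra.ofId K Ω)
  rw [map_nsmul, two_smul, _root_.map_zero]
  nth_rewrite 1 [hneg]
  exact neg_add_cancel _

lemma apply_y_eq_of_apply_x_eq (hP : 2 • P ≠ 0) {x y : Ω}
    {h : (W'.baseChange Ω).toAffine.Nonsingular x y}
    (hR : φ.hom (Affine.Point.some _ _ h) = Affine.Point.map (Algebra.ofId K Ω) P)
    (σ : Ω ≃ₐ[K] Ω) (hx : σ x = x) : σ y = y := by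
  rcases (Affine.Point.X_eq_iff
    (h₁ := (Affine.baseChange_nonsingular W' σ.toAlgHom.injective ..).mpr h)
    (h₂ := h)).mp hx with hσR | hσR
  · exact (Affine.Point.some.inj hσR).2
  · exact absurd hσR (φ.map_ne_neg hP hR σ)

end Isogeny

open scoped Classical in
theorem preimage_coordinate_field_eq_general {K : Type*} [Field K]
    (hK : (2 : K) ≠ 0 ∨ PerfectField K)
    (W' W : WeierstrassCurve K)
    (φ : Isogeny K (AlgebraicClosure K) W' W)
    (P : (W.baseChange K).toAffine.Point) (hP : 2 • P ≠ 0)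
    (R : (W'.baseChange (AlgebraicClosure K)).toAffine.Point)
    (hR : φ.hom R = WeierstrassCurve.Affine.Point.map (W' := W)
      (Algebra.ofId K (AlgebraicClosure K)) P) :
    IntermediateField.adjoin K {ptx R, pty R} = IntermediateField.adjoin K {ptx R} := by
  rcases R with _ | ⟨x, y, hxy⟩
  · simp [ptx, pty]
  set L := IntermediateField.adjoin K {x}
  have hxL : x ∈ L := IntermediateField.mem_adjoin_simple_self K x
  suffices hyL : y ∈ L from le_antisymm
    (IntermediateField.adjoin_le_iff.mpr <|
      Set.insert_subset hxL (Set.singleton_subset_iff.mpr hyL))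
    (IntermediateField.adjoin.mono _ _ _ (Set.singleton_subset_iff.mpr (Set.mem_insert _ _)))
  have mem_of_isSeparable (hsep : IsSeparable L y) : y ∈ L := by
    obtain ⟨l, rfl⟩ := Algebra.mem_bot.mp <| mem_bot_of_isSeparable_of_forall_algEquiv_apply_eq
      hsep fun σ ↦ φ.apply_y_eq_of_apply_x_eq hP hR (σ.restrictScalars K) (σ.commutes ⟨x, hxL⟩)
    exact l.2
  by_cases hy : y = (W'.baseChange (AlgebraicClosure K)).toAffine.negY x y
  · rcases hK with h2 | hperf
    · exact W'.mem_of_negY_eq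
        (by rw [← map_ofNat (algebraMap K _) 2]; exact (_root_.map_ne_zero _).mpr h2)
        hxL hy.symm
    · exact mem_of_isSeparable ((Algebra.IsSeparable.isSeparable K y).tower_top (L := L))
  · exact mem_of_isSeparable (W'.isSeparable_of_ne_negY hxL hxy.1 hy)

open scoped Classical in
/-- Lemma 2.1: if `char K ≠ 2` or `K` is perfect, `P ∈ E(K)` is not
2-torsion, `φ : E' → E` is an isogeny defined over `K` and `φ(R) = P`, then
`K(x'(R), y'(R)) = K(x'(R))`. -/
theorem preimage_coordinate_field_eq {K : Type*} [Field K]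
    (hK : (2 : K) ≠ 0 ∨ PerfectField K)
    (W' W : WeierstrassCurve K) [W'.IsElliptic] [W.IsElliptic]
    (φ : Isogeny K (AlgebraicClosure K) W' W)
    (P : (W.baseChange K).toAffine.Point) (hP : 2 • P ≠ 0)
    (R : (W'.baseChange (AlgebraicClosure K)).toAffine.Point)
    (hR : φ.hom R = WeierstrassCurve.Affine.Point.map (W' := W)
      (Algebra.ofId K (AlgebraicClosure K)) P) :
    IntermediateField.adjoin K {ptx R, pty R} = IntermediateField.adjoin K {ptx R} :=
  preimage_coordinate_field_eq_general hK W' W φ P hP R hR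
end

section
/- Let G be a subgroup of GL₂(ℤ/lℤ) for a prime l > 2 containing SL₂(ℤ/lℤ). Then the first group cohomology H¹(G, (ℤ/lℤ)²) (with the standard action) is trivial. -/
/-!
The scalar matrix `-1` lies in `SL₂(ℤ/lℤ) ≤ G`, is central, and acts on `V` as `-1`. For a
cocycle `β`, expanding `β((-1)A) = β(A(-1))` gives `-2 β(A) = A β(-1) - β(-1)`, and `2` is
invertible because `l` is odd; so `β` is the coboundary of `-β(-1)/2`.
-/

open groupCohomology

theorem groupCohomology.isCoboundary₁_of_isCocycle₁_of_central_smul_eq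
    {R G A : Type*} [Ring R] [Monoid G] [AddCommGroup A] [Module R A] [DistribMulAction G A]
    [SMulCommClass G R A] {f : G → A} (hf : IsCocycle₁ f) {z : G} (hz : ∀ g, Commute z g)
    {c : R} (hc : IsUnit (c - 1)) (hzA : ∀ a : A, z • a = c • a) : IsCoboundary₁ f := by
  obtain ⟨u, hu⟩ := hc
  refine ⟨(↑u⁻¹ : R) • f z, fun g => ?_⟩
  have key : (c - 1) • f g = g • f z - f z := by
    have hzg := hf z g
    rw [hz g, hf g z, hzA] at hzg
    rw [sub_smul, one_smul, sub_eq_sub_iff_add_eq_add, hzg]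
  rw [smul_comm, ← smul_sub, ← key, ← hu, smul_smul, Units.inv_mul, one_smul]

theorem ZMod.isUnit_neg_one_sub_one {l : ℕ} (hl : l.Prime) (hl2 : 2 < l) :
    IsUnit ((-1 : ZMod l) - 1) := by
  have : Fact l.Prime := ⟨hl⟩
  have : Fact (2 < l) := ⟨hl2⟩
  exact isUnit_iff_ne_zero.mpr (sub_ne_zero.mpr (CharP.neg_one_ne_one (ZMod l) l))

/-- for a prime `l > 2` and a subgroup `SL₂(ℤ/lℤ) ≤ G ≤ GL₂(ℤ/lℤ)`, the
cohomology group `H¹(G, (ℤ/lℤ)²)` is trivial: every crossed homomorphism `β : G → (ℤ/lℤ)²`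
(for the standard action by matrix multiplication) is principal. -/
theorem h1_trivial_of_SL_le (l : ℕ) (hl : l.Prime) (hl2 : 2 < l)
    (G : Subgroup (Matrix.GeneralLinearGroup (Fin 2) (ZMod l)))
    (hSL : ∀ A : Matrix.SpecialLinearGroup (Fin 2) (ZMod l),
      Matrix.SpecialLinearGroup.toGL A ∈ G)
    (β : G → (Fin 2 → ZMod l))
    (hβ : ∀ A B : G,
      β (A * B) = ((A : Matrix.GeneralLinearGroup (Fin 2) (ZMod l)) :
        Matrix (Fin 2) (Fin 2) (ZMod l)).mulVec (β B) + β A) :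
    ∃ v : Fin 2 → ZMod l, ∀ A : G,
      β A = ((A : Matrix.GeneralLinearGroup (Fin 2) (ZMod l)) :
        Matrix (Fin 2) (Fin 2) (ZMod l)).mulVec v - v := by
  have hneg : (-1 : Matrix.GeneralLinearGroup (Fin 2) (ZMod l)) ∈ G := by
    convert hSL (-1)
    ext : 1
    simp [Matrix.SpecialLinearGroup.coe_GL_coe_matrix]
  obtain ⟨v, hv⟩ := isCoboundary₁_of_isCocycle₁_of_central_smul_eq (A := Fin 2 → ZMod l) hβ
    (z := ⟨-1, hneg⟩) (fun g => Subtype.ext (Commute.neg_one_left (g : GL (Fin 2) (ZMod l))).eq)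
    (ZMod.isUnit_neg_one_sub_one hl hl2) (fun a => by simp)
  exact ⟨v, fun A => (hv A).symm⟩
end
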